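/- Let Ω ⊆ ℝ³ be open, let κ ∈ ℝ with κ ∉ {0, 1/2}, let α : Ω → ℝ be smooth and everywhere positive, and let ξ : Ω → ℝ³ be a smooth vector field with ξ × curl ξ = 0, |ξ| = α^{1−2κ}, and ∇α·ξ = 0 at every point of Ω. Then the vector field w = α^{2κ}·ξ satisfies w × curl w = κ·∇(|w|²) on Ω and |w| = α. If in addition div ξ = 0 on Ω, then div w = 0 on Ω. -/

import Mathlib

noncomputable section

/-- Points of `ℝ³`. -/
abbrev V3 : Type := Fin 3 → ℝ

/-- Standard basis vector. -/
def ee (i : Fin 3) : V3 := fun j => if j = i then 1 else 0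

/-- Partial derivative in the `i`-th coordinate direction. -/
def pd (i : Fin 3) (f : V3 → ℝ) (x : V3) : ℝ := fderiv ℝ f x (ee i)

/-- Gradient of a scalar field. -/
def grad (f : V3 → ℝ) (x : V3) : V3 := fun i => pd i f x

/-- Divergence of a vector field. -/
def vdiv (w : V3 → V3) (x : V3) : ℝ :=
  pd 0 (fun y => w y 0) x + pd 1 (fun y => w y 1) x + pd 2 (fun y => w y 2) x

/-- Curl of a vector field. -/
def vcurl (w : V3 → V3) (x : V3) : V3 :=
  ![pd 1 (fun y => w y 2) x - pd 2 (fun y => w y 1) x,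
    pd 2 (fun y => w y 0) x - pd 0 (fun y => w y 2) x,
    pd 0 (fun y => w y 1) x - pd 1 (fun y => w y 0) x]

/-- Euclidean dot product on `ℝ³`. -/
def dot3 (a b : V3) : ℝ := a 0 * b 0 + a 1 * b 1 + a 2 * b 2

/-- Cross product on `ℝ³`. -/
def cross3 (a b : V3) : V3 :=
  ![a 1 * b 2 - a 2 * b 1, a 2 * b 0 - a 0 * b 2, a 0 * b 1 - a 1 * b 0]

/-- Euclidean norm on `ℝ³`. -/
def norm3 (a : V3) : ℝ := Real.sqrt (dot3 a a)

/-- Laplacian of a scalar field. -/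
def lap (f : V3 → ℝ) (x : V3) : ℝ := vdiv (grad f) x

/-- A smooth orthogonal coordinate system on `Ω`: three smooth scalar functions whose
gradients are nonvanishing and pairwise orthogonal at every point of `Ω`. -/
def OrthoSystem (Ω : Set V3) (f g h : V3 → ℝ) : Prop :=
  ContDiffOn ℝ (⊤ : ℕ∞) f Ω ∧ ContDiffOn ℝ (⊤ : ℕ∞) g Ω ∧ ContDiffOn ℝ (⊤ : ℕ∞) h Ω ∧
    ∀ x ∈ Ω, grad f x ≠ 0 ∧ grad g x ≠ 0 ∧ grad h x ≠ 0 ∧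
      dot3 (grad f x) (grad g x) = 0 ∧ dot3 (grad f x) (grad h x) = 0 ∧
      dot3 (grad g x) (grad h x) = 0

lemma pd_mul (f g : V3 → ℝ) (x : V3) (hf : DifferentiableAt ℝ f x)
    (hg : DifferentiableAt ℝ g x) (i : Fin 3) :
    pd i (fun y => f y * g y) x = f x * pd i g x + g x * pd i f x := by
  unfold pd
  rw [fderiv_fun_mul hf hg]
  simp

lemma pd_rpow (f : V3 → ℝ) (x : V3) (hf : DifferentiableAt ℝ f x) (hfx : f x ≠ 0)
    (p : ℝ) (i : Fin 3) :
    pd i (fun y => f y ^ p) x = p * f x ^ (p - 1) * pd i f x := by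
  unfold pd
  rw [(hf.hasFDerivAt.rpow_const (Or.inl hfx)).fderiv]
  simp [mul_assoc]

/-- For `κ ∉ {0, 1/2}`, positive smooth `α`, and a smooth force-free `ξ`
with `|ξ| = α^{1−2κ}` and `∇α·ξ = 0`, the field `w = α^{2κ}·ξ` solves
`w × curl w = κ·∇(|w|²)` with `|w| = α`; if moreover `div ξ = 0` then `div w = 0`. -/
theorem stmt9 (Ω : Set V3) (hΩ : IsOpen Ω)
    (κ : ℝ) (hκ0 : κ ≠ 0) (hκhalf : κ ≠ 1 / 2)
    (α : V3 → ℝ) (hα : ContDiffOn ℝ (⊤ : ℕ∞) α Ω) (hαpos : ∀ x ∈ Ω, 0 < α x)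
    (ξ : V3 → V3) (hξs : ContDiffOn ℝ (⊤ : ℕ∞) ξ Ω)
    (hff : ∀ x ∈ Ω, cross3 (ξ x) (vcurl ξ x) = 0)
    (hnorm : ∀ x ∈ Ω, norm3 (ξ x) = α x ^ (1 - 2 * κ))
    (hperp : ∀ x ∈ Ω, dot3 (grad α x) (ξ x) = 0)
    (w : V3 → V3) (hw : w = fun x => (α x ^ (2 * κ)) • ξ x) :
    (∀ x ∈ Ω, cross3 (w x) (vcurl w x) = κ • grad (fun y => dot3 (w y) (w y)) x ∧
      norm3 (w x) = α x) ∧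
    ((∀ x ∈ Ω, vdiv ξ x = 0) → ∀ x ∈ Ω, vdiv w x = 0) := by
  subst hw
  have hxi : ∀ y ∈ Ω, dot3 (ξ y) (ξ y) = α y ^ (1 - 2*κ) * α y ^ (1 - 2*κ) := by
    intro y hy
    have h2 : Real.sqrt (dot3 (ξ y) (ξ y)) = α y ^ (1 - 2*κ) := hnorm y hy
    have h3 : 0 ≤ dot3 (ξ y) (ξ y) := by
      unfold dot3; nlinarith [sq_nonneg (ξ y 0), sq_nonneg (ξ y 1), sq_nonneg (ξ y 2)]
    rw [← h2, Real.mul_self_sqrt h3]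
  have hdot : ∀ y ∈ Ω, dot3 ((α y ^ (2*κ)) • ξ y) ((α y ^ (2*κ)) • ξ y) = α y * α y := by
    intro y hy
    have hay := hαpos y hy
    have hst : α y ^ (2*κ) * α y ^ (1 - 2*κ) = α y := by
      rw [← Real.rpow_add hay]
      norm_num
    have h1 := hxi y hy
    unfold dot3 at h1 ⊢
    simp only [Pi.smul_apply, smul_eq_mul]
    linear_combination (α y ^ (2*κ))^2 * h1 +
      (α y ^ (2*κ) * α y ^ (1 - 2*κ) + α y) * hst
  have key : ∀ x ∈ Ω, ∀ i j : Fin 3,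
      pd i (fun y => α y ^ (2*κ) * ξ y j) x
        = 2*κ * α x ^ (2*κ - 1) * pd i α x * ξ x j
            + α x ^ (2*κ) * pd i (fun y => ξ y j) x := by
    intro x hx i j
    have hx' := hΩ.mem_nhds hx
    have ha0 : α x ≠ 0 := ne_of_gt (hαpos x hx)
    have hαd : DifferentiableAt ℝ α x := (hα.contDiffAt hx').differentiableAt (by simp)
    have hξd : DifferentiableAt ℝ ξ x := (hξs.contDiffAt hx').differentiableAt (by simp)
    have hξdj : DifferentiableAt ℝ (fun y => ξ y j) x := differentiableAt_pi.mp hξd j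
    have hA : DifferentiableAt ℝ (fun y => α y ^ (2*κ)) x := hαd.rpow_const (Or.inl ha0)
    rw [pd_mul _ _ x hA hξdj i, pd_rpow α x hαd ha0 (2*κ) i]
    ring
  constructor
  · intro x hx
    have hx' := hΩ.mem_nhds hx
    have ha := hαpos x hx
    have ha0 : α x ≠ 0 := ne_of_gt ha
    have hαd : DifferentiableAt ℝ α x := (hα.contDiffAt hx').differentiableAt (by simp)
    have hdd : (fun y => dot3 ((α y ^ (2*κ)) • ξ y) ((α y ^ (2*κ)) • ξ y))
        =ᶠ[nhds x] (fun y => α y * α y) := by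
      filter_upwards [hx'] with y hy using hdot y hy
    have hgrad : ∀ i : Fin 3,
        grad (fun y => dot3 ((α y ^ (2*κ)) • ξ y) ((α y ^ (2*κ)) • ξ y)) x i
          = 2 * (α x * pd i α x) := by
      intro i
      simp only [grad, pd]
      rw [hdd.fderiv_eq]
      have h := pd_mul α α x hαd hαd i
      unfold pd at h
      rw [h]; ring
    have hE : α x ^ (2*κ) * α x ^ (2*κ - 1) * (α x ^ (1 - 2*κ) * α x ^ (1 - 2*κ)) = α x := by
      rw [← Real.rpow_add ha, ← Real.rpow_add ha, ← Real.rpow_add ha,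
        show (2*κ + (2*κ - 1) + (1 - 2*κ + (1 - 2*κ))) = (1:ℝ) by ring, Real.rpow_one]
    have hperpx := hperp x hx
    simp only [dot3, grad] at hperpx
    have hxix := hxi x hx
    unfold dot3 at hxix
    have hf0 : cross3 (ξ x) (vcurl ξ x) 0 = 0 := by rw [hff x hx]; rfl
    have hf1 : cross3 (ξ x) (vcurl ξ x) 1 = 0 := by rw [hff x hx]; rfl
    have hf2 : cross3 (ξ x) (vcurl ξ x) 2 = 0 := by rw [hff x hx]; rfl
    simp only [cross3, vcurl, Matrix.cons_val_zero, Matrix.cons_val_one, Matrix.head_cons,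
      Matrix.cons_val_two, Matrix.tail_cons] at hf0 hf1 hf2
    constructor
    · funext i
      fin_cases i <;>
        simp only [cross3, vcurl, Matrix.cons_val_zero, Matrix.cons_val_one, Matrix.head_cons,
          Matrix.cons_val_two, Matrix.tail_cons, Pi.smul_apply, smul_eq_mul,
          Fin.zero_eta, Fin.mk_one, Fin.reduceFinMk, key x hx, hgrad, Fin.isValue]
      · linear_combination (α x ^ (2*κ))^2 * hf0
          + 2*κ * (α x ^ (2*κ)) * (α x ^ (2*κ-1)) * (pd 0 α x) * hxix
          - 2*κ * (α x ^ (2*κ)) * (α x ^ (2*κ-1)) * (ξ x 0) * hperpx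
          + 2*κ * (pd 0 α x) * hE
      · linear_combination (α x ^ (2*κ))^2 * hf1
          + 2*κ * (α x ^ (2*κ)) * (α x ^ (2*κ-1)) * (pd 1 α x) * hxix
          - 2*κ * (α x ^ (2*κ)) * (α x ^ (2*κ-1)) * (ξ x 1) * hperpx
          + 2*κ * (pd 1 α x) * hE
      · linear_combination (α x ^ (2*κ))^2 * hf2
          + 2*κ * (α x ^ (2*κ)) * (α x ^ (2*κ-1)) * (pd 2 α x) * hxix
          - 2*κ * (α x ^ (2*κ)) * (α x ^ (2*κ-1)) * (ξ x 2) * hperpx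
          + 2*κ * (pd 2 α x) * hE
    · unfold norm3
      rw [hdot x hx, Real.sqrt_mul_self ha.le]
  · intro hdiv x hx
    have hdivx := hdiv x hx
    have hperpx := hperp x hx
    simp only [dot3, grad] at hperpx
    unfold vdiv at hdivx ⊢
    simp only [Pi.smul_apply, smul_eq_mul, key x hx]
    linear_combination 2*κ * (α x ^ (2*κ - 1)) * hperpx + (α x ^ (2*κ)) * hdivx
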